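/- Let p : X → Y be an open continuous surjection between compact Hausdorff spaces such that every fiber of O(p) : O(X) → O(Y) contains more than one point. Then the maps s⁺, s⁻ : O(Y) → O(X), sending λ ∈ O(Y) to the pointwise supremum (respectively, the pointwise infimum) of the fiber O(p)⁻¹(λ), are two continuous sections of O(p) (i.e., O(p) ∘ s⁺ = id = O(p) ∘ s⁻) with disjoint images. -/

import Mathlib

/-!
For `φ ∈ C(X)` the fiberwise maximum `y ↦ max_{p⁻¹(y)} φ` is continuous: it is lower
semicontinuous because `p` is open and upper semicontinuous because `p` is closed.
Precomposing `λ ∈ O(Y)` with this operator gives a section `s⁺(λ)` of `O(p)`, and since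
`φ ≤ (max_{p⁻¹(·)} φ) ∘ p`, every `ν` in the fiber over `λ` satisfies `ν(φ) ≤ s⁺(λ)(φ)`;
dually for the fiberwise minimum and `s⁻`. If `s⁺(λ) = s⁻(λ')`, applying `O(p)` gives
`λ = λ'`, and the fiber over `λ` is squeezed between `s⁻(λ)` and `s⁺(λ)`, hence a point.
-/

/-- The set of normed, weakly additive, order-preserving functionals on `C(X, ℝ)`. -/
def OF (X : Type*) [TopologicalSpace X] : Set (C(X, ℝ) → ℝ) :=
  {ν | ν 1 = 1 ∧ (∀ (φ : C(X, ℝ)) (c : ℝ), ν (φ + ContinuousMap.const X c) = ν φ + c) ∧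
    ∀ φ ψ : C(X, ℝ), φ ≤ ψ → ν φ ≤ ν ψ}

/-- For `φ ∈ C(X, ℝ)`, the evaluation map `π_φ : O(X) → ℝ`. -/
def piO (X : Type*) [TopologicalSpace X] (φ : C(X, ℝ)) : C(↥(OF X), ℝ) :=
  ⟨fun ν => ν.1 φ, (continuous_apply φ).comp continuous_subtype_val⟩

/-- The monad multiplication `μ_O X : O(O(X)) → O(X)`, `μ_O X (M) (φ) = M (π_φ)`. -/
def muO (X : Type*) [TopologicalSpace X] (M : ↥(OF (↥(OF X)))) : ↥(OF X) := by
  refine ⟨fun φ => M.1 (piO X φ), ?_, ?_, ?_⟩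
  · have h1 : piO X (1 : C(X, ℝ)) = 1 := by
      ext ν; exact ν.2.1
    show M.1 (piO X 1) = 1
    rw [h1]; exact M.2.1
  · intro φ c
    have h : piO X (φ + ContinuousMap.const X c)
        = piO X φ + ContinuousMap.const _ c := by
      ext ν; exact ν.2.2.1 φ c
    show M.1 (piO X (φ + ContinuousMap.const X c)) = M.1 (piO X φ) + c
    rw [h]; exact M.2.2.1 _ c
  · intro φ ψ h
    exact M.2.2.2 _ _ (fun ν => ν.2.2.2 φ ψ h)

/-- The functorial map `O(f) : O(X) → O(Y)`, `O(f)(ν)(φ) = ν(φ ∘ f)`. -/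
def OFmap {X Y : Type*} [TopologicalSpace X] [TopologicalSpace Y] (f : X → Y)
    (hf : Continuous f) (ν : ↥(OF X)) : ↥(OF Y) := by
  refine ⟨fun φ => ν.1 (φ.comp ⟨f, hf⟩), ?_, ?_, ?_⟩
  · show ν.1 ((1 : C(Y, ℝ)).comp ⟨f, hf⟩) = 1
    have h1 : (1 : C(Y, ℝ)).comp ⟨f, hf⟩ = 1 := rfl
    rw [h1]; exact ν.2.1
  · intro φ c
    show ν.1 ((φ + ContinuousMap.const Y c).comp ⟨f, hf⟩) = ν.1 (φ.comp ⟨f, hf⟩) + c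
    have h : (φ + ContinuousMap.const Y c).comp ⟨f, hf⟩
        = φ.comp ⟨f, hf⟩ + ContinuousMap.const X c := rfl
    rw [h]; exact ν.2.2.1 _ c
  · intro φ ψ h
    exact ν.2.2.2 _ _ (fun x => h (f x))


open Function Set

theorem nonempty_fiber {X Y : Type*} {p : X → Y} (hs : Surjective p) (y : Y) :
    (p ⁻¹' {y}).Nonempty :=
  hs y

section FiberExtrema

variable {X Y α : Type*} [TopologicalSpace X] [CompactSpace X] [TopologicalSpace Y]
  [TopologicalSpace α] {p : X → Y} {f : X → α}

theorem isCompact_image_fiber [T1Space Y] (hp : Continuous p) (hf : Continuous f) (y : Y) :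
    IsCompact (f '' (p ⁻¹' {y})) :=
  (isClosed_singleton.preimage hp).isCompact.image hf

variable [ConditionallyCompleteLinearOrder α] [OrderTopology α]

theorem preimage_sSup_image_fiber [T1Space Y] (hp : Continuous p) (hs : Surjective p)
    (hf : Continuous f) {t : Set α} (ht : IsUpperSet t) :
    (fun y => sSup (f '' (p ⁻¹' {y}))) ⁻¹' t = p '' (f ⁻¹' t) := by
  ext y
  have hmax := (isCompact_image_fiber hp hf y).isGreatest_sSup ((nonempty_fiber hs y).image f)
  constructor
  · intro hy
    obtain ⟨x, hx, hxy⟩ := hmax.1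
    exact ⟨x, show f x ∈ t from hxy ▸ hy, hx⟩
  · rintro ⟨x, hx, rfl⟩
    exact ht (hmax.2 ⟨x, rfl, rfl⟩) hx

theorem continuous_sSup_image_fiber [T2Space Y] (hp : Continuous p) (ho : IsOpenMap p)
    (hs : Surjective p) (hf : Continuous f) :
    Continuous fun y => sSup (f '' (p ⁻¹' {y})) := by
  refine continuous_iff_lower_upperSemicontinuous.2 ⟨?_, ?_⟩
  · refine lowerSemicontinuous_iff_isOpen_preimage.2 fun c => ?_
    rw [preimage_sSup_image_fiber hp hs hf (isUpperSet_Ioi c)]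
    exact ho _ (isOpen_Ioi.preimage hf)
  · refine upperSemicontinuous_iff_isClosed_preimage.2 fun c => ?_
    rw [preimage_sSup_image_fiber hp hs hf (isUpperSet_Ici c)]
    exact hp.isClosedMap _ (isClosed_Ici.preimage hf)

theorem continuous_sInf_image_fiber [T2Space Y] (hp : Continuous p) (ho : IsOpenMap p)
    (hs : Surjective p) (hf : Continuous f) :
    Continuous fun y => sInf (f '' (p ⁻¹' {y})) :=
  continuous_sSup_image_fiber (α := αᵒᵈ) hp ho hs hf

end FiberExtrema

section FiberwiseSupInf

variable {X Y : Type*} [TopologicalSpace X] [CompactSpace X] [TopologicalSpace Y] [T2Space Y]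

noncomputable def fiberSup (p : X → Y) (hp : Continuous p) (ho : IsOpenMap p)
    (hs : Surjective p) (φ : C(X, ℝ)) : C(Y, ℝ) :=
  ⟨fun y => sSup (φ '' (p ⁻¹' {y})), continuous_sSup_image_fiber hp ho hs φ.continuous⟩

noncomputable def fiberInf (p : X → Y) (hp : Continuous p) (ho : IsOpenMap p)
    (hs : Surjective p) (φ : C(X, ℝ)) : C(Y, ℝ) :=
  ⟨fun y => sInf (φ '' (p ⁻¹' {y})), continuous_sInf_image_fiber hp ho hs φ.continuous⟩

variable {p : X → Y} (hp : Continuous p) (ho : IsOpenMap p) (hs : Surjective p)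

theorem le_fiberSup_comp (φ : C(X, ℝ)) : φ ≤ (fiberSup p hp ho hs φ).comp ⟨p, hp⟩ := fun x =>
  le_csSup (isCompact_image_fiber hp φ.continuous (p x)).bddAbove ⟨x, rfl, rfl⟩

theorem fiberInf_comp_le (φ : C(X, ℝ)) : (fiberInf p hp ho hs φ).comp ⟨p, hp⟩ ≤ φ := fun x =>
  csInf_le (isCompact_image_fiber hp φ.continuous (p x)).bddBelow ⟨x, rfl, rfl⟩

theorem fiberSup_mono : Monotone (fiberSup p hp ho hs) := fun φ ψ h y =>
  csSup_le ((nonempty_fiber hs y).image φ) <| forall_mem_image.2 fun x hx =>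
    (h x).trans (le_csSup (isCompact_image_fiber hp ψ.continuous y).bddAbove ⟨x, hx, rfl⟩)

theorem fiberInf_mono : Monotone (fiberInf p hp ho hs) := fun φ ψ h y =>
  le_csInf ((nonempty_fiber hs y).image ψ) <| forall_mem_image.2 fun x hx =>
    (csInf_le (isCompact_image_fiber hp φ.continuous y).bddBelow ⟨x, hx, rfl⟩).trans (h x)

theorem fiberSup_comp (ψ : C(Y, ℝ)) : fiberSup p hp ho hs (ψ.comp ⟨p, hp⟩) = ψ := by
  ext y
  change sSup ((ψ ∘ p) '' (p ⁻¹' {y})) = ψ y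
  rw [image_comp, image_preimage_eq _ hs, image_singleton, csSup_singleton]

theorem fiberInf_comp (ψ : C(Y, ℝ)) : fiberInf p hp ho hs (ψ.comp ⟨p, hp⟩) = ψ := by
  ext y
  change sInf ((ψ ∘ p) '' (p ⁻¹' {y})) = ψ y
  rw [image_comp, image_preimage_eq _ hs, image_singleton, csInf_singleton]

theorem fiberSup_one : fiberSup p hp ho hs 1 = 1 :=
  fiberSup_comp hp ho hs 1

theorem fiberInf_one : fiberInf p hp ho hs 1 = 1 :=
  fiberInf_comp hp ho hs 1

theorem fiberSup_add_const (φ : C(X, ℝ)) (c : ℝ) :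
    fiberSup p hp ho hs (φ + .const X c) = fiberSup p hp ho hs φ + .const Y c := by
  ext y
  change sSup ((OrderIso.addRight c ∘ φ) '' (p ⁻¹' {y})) = sSup (φ '' (p ⁻¹' {y})) + c
  rw [image_comp]
  exact ((OrderIso.addRight c).map_csSup' ((nonempty_fiber hs y).image φ)
    (isCompact_image_fiber hp φ.continuous y).bddAbove).symm

theorem fiberInf_add_const (φ : C(X, ℝ)) (c : ℝ) :
    fiberInf p hp ho hs (φ + .const X c) = fiberInf p hp ho hs φ + .const Y c := by
  ext y
  change sInf ((OrderIso.addRight c ∘ φ) '' (p ⁻¹' {y})) = sInf (φ '' (p ⁻¹' {y})) + c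
  rw [image_comp]
  exact ((OrderIso.addRight c).map_csInf' ((nonempty_fiber hs y).image φ)
    (isCompact_image_fiber hp φ.continuous y).bddBelow).symm

end FiberwiseSupInf

namespace OF

variable {X Y : Type*} [TopologicalSpace X] [TopologicalSpace Y]

def precomp (T : C(X, ℝ) → C(Y, ℝ)) (hT : Monotone T) (hT₁ : T 1 = 1)
    (hTc : ∀ φ c, T (φ + .const X c) = T φ + .const Y c) (lam : OF Y) : OF X :=
  ⟨fun φ => lam.1 (T φ), by simpa only [hT₁] using lam.2.1,
    fun φ c => by simpa only [hTc] using lam.2.2.1 (T φ) c, fun _ _ h => lam.2.2.2 _ _ (hT h)⟩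

variable {T : C(X, ℝ) → C(Y, ℝ)} (hT : Monotone T) (hT₁ : T 1 = 1)
  (hTc : ∀ φ c, T (φ + .const X c) = T φ + .const Y c)

theorem continuous_precomp : Continuous (precomp T hT hT₁ hTc) :=
  continuous_induced_rng.2 <| continuous_pi fun φ =>
    (continuous_apply (T φ)).comp continuous_subtype_val

theorem OFmap_precomp {p : X → Y} {hp : Continuous p} (hTp : ∀ ψ, T (ψ.comp ⟨p, hp⟩) = ψ)
    (lam : OF Y) : OFmap p hp (precomp T hT hT₁ hTc lam) = lam :=
  Subtype.ext <| funext fun ψ => congrArg lam.1 (hTp ψ)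

end OF

section ExtremalSections

variable {X Y : Type*} [TopologicalSpace X] [CompactSpace X] [TopologicalSpace Y] [T2Space Y]

noncomputable def sPlus (p : X → Y) (hp : Continuous p) (ho : IsOpenMap p) (hs : Surjective p) :
    OF Y → OF X :=
  OF.precomp (fiberSup p hp ho hs) (fiberSup_mono hp ho hs) (fiberSup_one hp ho hs)
    (fiberSup_add_const hp ho hs)

noncomputable def sMinus (p : X → Y) (hp : Continuous p) (ho : IsOpenMap p) (hs : Surjective p) :
    OF Y → OF X :=
  OF.precomp (fiberInf p hp ho hs) (fiberInf_mono hp ho hs) (fiberInf_one hp ho hs)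
    (fiberInf_add_const hp ho hs)

variable {p : X → Y} (hp : Continuous p) (ho : IsOpenMap p) (hs : Surjective p)

theorem OFmap_sPlus (lam : OF Y) : OFmap p hp (sPlus p hp ho hs lam) = lam :=
  OF.OFmap_precomp _ _ _ (fiberSup_comp hp ho hs) lam

theorem OFmap_sMinus (lam : OF Y) : OFmap p hp (sMinus p hp ho hs lam) = lam :=
  OF.OFmap_precomp _ _ _ (fiberInf_comp hp ho hs) lam

theorem isGreatest_sPlus (lam : OF Y) (φ : C(X, ℝ)) :
    IsGreatest ((fun ν : OF X => ν.1 φ) '' (OFmap p hp ⁻¹' {lam}))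
      ((sPlus p hp ho hs lam).1 φ) := by
  refine ⟨⟨_, OFmap_sPlus hp ho hs lam, rfl⟩, ?_⟩
  rintro _ ⟨ν, rfl, rfl⟩
  exact ν.2.2.2 _ _ (le_fiberSup_comp hp ho hs φ)

theorem isLeast_sMinus (lam : OF Y) (φ : C(X, ℝ)) :
    IsLeast ((fun ν : OF X => ν.1 φ) '' (OFmap p hp ⁻¹' {lam}))
      ((sMinus p hp ho hs lam).1 φ) := by
  refine ⟨⟨_, OFmap_sMinus hp ho hs lam, rfl⟩, ?_⟩
  rintro _ ⟨ν, rfl, rfl⟩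
  exact ν.2.2.2 _ _ (fiberInf_comp_le hp ho hs φ)

theorem subsingleton_fiber_of_sPlus_eq_sMinus {lam : OF Y}
    (h : sPlus p hp ho hs lam = sMinus p hp ho hs lam) :
    (OFmap p hp ⁻¹' {lam}).Subsingleton := by
  suffices hν : ∀ ν ∈ OFmap p hp ⁻¹' {lam}, ν = sPlus p hp ho hs lam from
    fun ν₁ h₁ ν₂ h₂ => (hν ν₁ h₁).trans (hν ν₂ h₂).symm
  refine fun ν hν => Subtype.ext <| funext fun φ => le_antisymm ?_ ?_
  · exact (isGreatest_sPlus hp ho hs lam φ).2 ⟨ν, hν, rfl⟩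
  · rw [h]
    exact (isLeast_sMinus hp ho hs lam φ).2 ⟨ν, hν, rfl⟩

end ExtremalSections

theorem OFmap_two_disjoint_sections_general {X Y : Type*} [TopologicalSpace X] [CompactSpace X]
    [TopologicalSpace Y] [T2Space Y]
    (p : X → Y) (hc : Continuous p) (ho : IsOpenMap p) (hs : Function.Surjective p)
    (hfib : ∀ lam : ↥(OF Y), ∃ ν₁ ν₂ : ↥(OF X),
      ν₁ ≠ ν₂ ∧ OFmap p hc ν₁ = lam ∧ OFmap p hc ν₂ = lam) :
    ∃ sPlus sMinus : ↥(OF Y) → ↥(OF X),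
      (∀ lam : ↥(OF Y), (sPlus lam).1 = fun φ : C(X, ℝ) =>
        sSup ((fun ν : ↥(OF X) => ν.1 φ) '' (OFmap p hc ⁻¹' {lam}))) ∧
      (∀ lam : ↥(OF Y), (sMinus lam).1 = fun φ : C(X, ℝ) =>
        sInf ((fun ν : ↥(OF X) => ν.1 φ) '' (OFmap p hc ⁻¹' {lam}))) ∧
      Continuous sPlus ∧ Continuous sMinus ∧
      OFmap p hc ∘ sPlus = id ∧ OFmap p hc ∘ sMinus = id ∧
      Set.range sPlus ∩ Set.range sMinus = ∅ := by
  refine ⟨sPlus p hc ho hs, sMinus p hc ho hs,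
    fun lam => funext fun φ => (isGreatest_sPlus hc ho hs lam φ).csSup_eq.symm,
    fun lam => funext fun φ => (isLeast_sMinus hc ho hs lam φ).csInf_eq.symm,
    OF.continuous_precomp _ _ _, OF.continuous_precomp _ _ _,
    funext (OFmap_sPlus hc ho hs), funext (OFmap_sMinus hc ho hs), ?_⟩
  refine eq_empty_iff_forall_notMem.2 ?_
  rintro _ ⟨⟨lam, rfl⟩, lam', h⟩
  obtain rfl : lam = lam' := by
    rw [← OFmap_sPlus hc ho hs lam, ← h, OFmap_sMinus hc ho hs lam']
  obtain ⟨ν₁, ν₂, hne, h₁, h₂⟩ := hfib lam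
  exact hne (subsingleton_fiber_of_sPlus_eq_sMinus hc ho hs h.symm h₁ h₂)

/-- Let `p : X → Y` be an open continuous surjection of compact Hausdorff spaces such
that every fiber of `O(p)` has more than one point. Then the maps sending `λ ∈ O(Y)` to
the pointwise supremum (resp. infimum) of the fiber `O(p)⁻¹(λ)` are two continuous
sections of `O(p)` with disjoint images. -/
theorem OFmap_two_disjoint_sections {X Y : Type*} [TopologicalSpace X] [CompactSpace X]
    [T2Space X] [TopologicalSpace Y] [CompactSpace Y] [T2Space Y]
    (p : X → Y) (hc : Continuous p) (ho : IsOpenMap p) (hs : Function.Surjective p)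
    (hfib : ∀ lam : ↥(OF Y), ∃ ν₁ ν₂ : ↥(OF X),
      ν₁ ≠ ν₂ ∧ OFmap p hc ν₁ = lam ∧ OFmap p hc ν₂ = lam) :
    ∃ sPlus sMinus : ↥(OF Y) → ↥(OF X),
      (∀ lam : ↥(OF Y), (sPlus lam).1 = fun φ : C(X, ℝ) =>
        sSup ((fun ν : ↥(OF X) => ν.1 φ) '' (OFmap p hc ⁻¹' {lam}))) ∧
      (∀ lam : ↥(OF Y), (sMinus lam).1 = fun φ : C(X, ℝ) =>
        sInf ((fun ν : ↥(OF X) => ν.1 φ) '' (OFmap p hc ⁻¹' {lam}))) ∧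
      Continuous sPlus ∧ Continuous sMinus ∧
      OFmap p hc ∘ sPlus = id ∧ OFmap p hc ∘ sMinus = id ∧
      Set.range sPlus ∩ Set.range sMinus = ∅ :=
  OFmap_two_disjoint_sections_general p hc ho hs hfib
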